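/- Let A and B be symmetric positive definite d×d real matrices with unique positive definite square roots A^{1/2} and B^{1/2}. Then |A^{1/2} - B^{1/2}| ≤ |A - B| / (λ_min(A^{1/2}) + λ_min(B^{1/2})), where |·| denotes the Frobenius norm. -/

import Mathlib

/-! With `E = S - T` one has `A - B = S * E + E * T`, hence
`tr (Eᵀ (A - B)) = tr (Eᵀ S E) + tr (E T Eᵀ)`. Each summand is at least the smallest eigenvalue
of `S`, resp. `T`, times `‖E‖²`, because `S - λ_min(S) • 1` is positive semidefinite; Cauchy–Schwarz
bounds the left side by `‖E‖ * ‖A - B‖`. -/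

/-- Frobenius norm of a square real matrix. -/
noncomputable def frob {d : ℕ} (A : Matrix (Fin d) (Fin d) ℝ) : ℝ :=
  Real.sqrt (∑ i, ∑ j, (A i j) ^ 2)

open Matrix MatrixOrder ComplexOrder

theorem Matrix.IsHermitian.posSemidef_sub_algebraMap {n 𝕜 : Type*} [Fintype n] [DecidableEq n]
    [RCLike 𝕜] {A : Matrix n n 𝕜} (hA : A.IsHermitian) {l : ℝ}
    (hl : ∀ i, l ≤ hA.eigenvalues i) : (A - algebraMap ℝ _ l).PosSemidef := by
  rw [← le_iff, algebraMap_le_iff_le_spectrum hA.isSelfAdjoint,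
    hA.spectrum_real_eq_range_eigenvalues]
  rintro _ ⟨i, rfl⟩
  exact hl i

section Frobenius

variable {d : ℕ}

theorem frob_nonneg (A : Matrix (Fin d) (Fin d) ℝ) : 0 ≤ frob A :=
  Real.sqrt_nonneg _

theorem frob_transpose (A : Matrix (Fin d) (Fin d) ℝ) : frob Aᵀ = frob A := by
  rw [frob, frob, Finset.sum_comm]
  rfl

theorem trace_transpose_mul_self (A : Matrix (Fin d) (Fin d) ℝ) :
    trace (Aᵀ * A) = frob A ^ 2 := by
  rw [frob, Real.sq_sqrt (by positivity), Finset.sum_comm]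
  simp only [trace, diag, mul_apply, transpose_apply, sq]

theorem trace_transpose_mul_le_frob_mul_frob (A B : Matrix (Fin d) (Fin d) ℝ) :
    trace (Aᵀ * B) ≤ frob A * frob B := by
  simp only [trace, diag, mul_apply, transpose_apply, frob]
  rw [Finset.sum_comm]
  simp only [← Fintype.sum_prod_type']
  exact Real.sum_mul_le_sqrt_mul_sqrt _ _ _

theorem mul_frob_sq_le_trace_transpose_mul_mul {S : Matrix (Fin d) (Fin d) ℝ}
    (hS : S.IsHermitian) {l : ℝ} (hl : ∀ i, l ≤ hS.eigenvalues i) (E : Matrix (Fin d) (Fin d) ℝ) :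
    l * frob E ^ 2 ≤ trace (Eᵀ * S * E) := by
  have h := ((hS.posSemidef_sub_algebraMap hl).conjTranspose_mul_mul_same E).trace_nonneg
  rw [conjTranspose_eq_transpose_of_trivial, mul_sub, sub_mul, trace_sub,
    Algebra.algebraMap_eq_smul_one, Matrix.mul_smul, mul_one, smul_mul, trace_smul,
    trace_transpose_mul_self, smul_eq_mul] at h
  linarith

end Frobenius

theorem sqrt_perturbation_bound_general {d : ℕ} (hd : 0 < d)
    (A B S T : Matrix (Fin d) (Fin d) ℝ)
    (hS : S.PosDef) (hT : T.PosDef)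
    (hS2 : S * S = A) (hT2 : T * T = B) :
    frob (S - T) ≤
      frob (A - B) /
        (Finset.univ.inf' ⟨⟨0, hd⟩, Finset.mem_univ _⟩ hS.1.eigenvalues +
          Finset.univ.inf' ⟨⟨0, hd⟩, Finset.mem_univ _⟩ hT.1.eigenvalues) := by
  set lS := Finset.univ.inf' ⟨⟨0, hd⟩, Finset.mem_univ _⟩ hS.1.eigenvalues
  set lT := Finset.univ.inf' ⟨⟨0, hd⟩, Finset.mem_univ _⟩ hT.1.eigenvalues
  set E := S - T with hE
  have hpos : 0 < lS + lT := add_pos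
    ((Finset.lt_inf'_iff _).2 fun i _ => hS.eigenvalues_pos i)
    ((Finset.lt_inf'_iff _).2 fun i _ => hT.eigenvalues_pos i)
  have hsplit : trace (Eᵀ * (A - B)) = trace (Eᵀ * S * E) + trace (Eᵀᵀ * T * Eᵀ) := by
    have hAB : A - B = S * E + E * T := by rw [hE, ← hS2, ← hT2]; noncomm_ring
    rw [hAB, transpose_transpose, trace_mul_cycle E, mul_add, trace_add, mul_assoc, mul_assoc]
  have hlower : (lS + lT) * frob E ^ 2 ≤ trace (Eᵀ * (A - B)) := by
    have hS_le : ∀ i, lS ≤ hS.1.eigenvalues i := fun i => Finset.inf'_le _ (Finset.mem_univ i)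
    have hT_le : ∀ i, lT ≤ hT.1.eigenvalues i := fun i => Finset.inf'_le _ (Finset.mem_univ i)
    rw [hsplit, add_mul]
    refine add_le_add (mul_frob_sq_le_trace_transpose_mul_mul hS.1 hS_le E) ?_
    rw [← frob_transpose]
    exact mul_frob_sq_le_trace_transpose_mul_mul hT.1 hT_le Eᵀ
  have hupper := trace_transpose_mul_le_frob_mul_frob E (A - B)
  rw [le_div_iff₀ hpos]
  rcases (frob_nonneg E).eq_or_lt with h0 | h0
  · rw [← h0, zero_mul]
    exact frob_nonneg _
  · exact le_of_mul_le_mul_left (by nlinarith) h0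

theorem sqrt_perturbation_bound {d : ℕ} (hd : 0 < d)
    (A B S T : Matrix (Fin d) (Fin d) ℝ)
    (hA : A.PosDef) (hB : B.PosDef) (hS : S.PosDef) (hT : T.PosDef)
    (hS2 : S * S = A) (hT2 : T * T = B) :
    frob (S - T) ≤
      frob (A - B) /
        (Finset.univ.inf' ⟨⟨0, hd⟩, Finset.mem_univ _⟩ hS.1.eigenvalues +
          Finset.univ.inf' ⟨⟨0, hd⟩, Finset.mem_univ _⟩ hT.1.eigenvalues) :=
  sqrt_perturbation_bound_general hd A B S T hS hT hS2 hT2
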